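/- (L² × BMO → L² paraproduct estimates.) For all dyadic test functions f, g ∈ S one has ‖π_hl(f,g)‖_{L²} ≤ C‖f‖_{L²}‖g‖_{L^∞}, and ‖π_hh(f,g)‖_{L²} ≤ C‖f‖_{L²}‖g‖_{BMO} and ‖π_lh(f,g)‖_{L²} ≤ C‖f‖_{L²}‖g‖_{BMO}, with an absolute constant C. -/

import Mathlib

open MeasureTheory Set

noncomputable section

namespace Dyadic

/-- A dyadic interval/lacunary tile: `I = [j·2^k, (j+1)·2^k)` with `-M ≤ k ≤ M`,
`I ⊆ [0, 2^M)`.  Lacunary tiles are in bijection with dyadic intervals, so we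
identify the tile `P⁺(I) = I × [1/|I|, 2/|I|)` with the data of `I`. -/
structure Tile (M : ℕ) where
  j : ℤ
  k : ℤ
  hk_lb : -(M : ℤ) ≤ k
  hk_ub : k ≤ (M : ℤ)
  hj : 0 ≤ j
  hsub : ((j : ℝ) + 1) * 2 ^ k ≤ 2 ^ (M : ℤ)

variable {M : ℕ}

/-- The side length `|I_P| = 2^k` of the spatial interval of the tile. -/
def Tile.len (P : Tile M) : ℝ := 2 ^ P.k

/-- The spatial interval `I_P` of the tile. -/
def Tile.ival (P : Tile M) : Set ℝ :=
  Ico ((P.j : ℝ) * 2 ^ P.k) (((P.j : ℝ) + 1) * 2 ^ P.k)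

/-- The order `P ≤′ Q` on lacunary tiles: `I_P ⊆ I_Q`. -/
def Tile.le (P Q : Tile M) : Prop := P.ival ⊆ Q.ival

/-- A (lacunary) tree: a collection of tiles together with a top tile. -/
structure Tree (M : ℕ) where
  tiles : Set (Tile M)
  top : Tile M
  top_mem : top ∈ tiles
  le_top : ∀ P ∈ tiles, P.le top

/-- `|I_T|`, the length of the spatial interval of the top of the tree. -/
def Tree.len (T : Tree M) : ℝ := T.top.len

/-- A collection of tiles is convex if `P₁ ≤′ P ≤′ P₂` with `P₁, P₂` in the
collection implies `P` is in the collection. -/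
def IsConvex (PP : Set (Tile M)) : Prop :=
  ∀ P₁ ∈ PP, ∀ P₂ ∈ PP, ∀ P : Tile M, P₁.le P → P.le P₂ → P ∈ PP

/-- The size `‖a‖_{size(T)} = (1/|I_T|) Σ_{P ∈ T} a(P)` of `a` on a tree `T`. -/
def treeSize (a : Tile M → ℝ) (T : Tree M) : ℝ :=
  (∑ᶠ P ∈ T.tiles, a P) / T.len

/-- The maximal size `‖a‖_{size*(PP)}`: the supremum of `‖a‖_{size(T)}` over all
convex trees `T ⊆ PP` (by convention `0` if there are none). -/
def maxSize (a : Tile M → ℝ) (PP : Set (Tile M)) : ℝ :=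
  sSup (insert 0 {s : ℝ | ∃ T : Tree M, T.tiles ⊆ PP ∧ IsConvex T.tiles ∧ s = treeSize a T})

/-- The complete tree `Tree(P) = {Q : Q ≤′ P}`. -/
def cTree (P : Tile M) : Set (Tile M) := {Q : Tile M | Q.le P}

/-- A tree `T` is complete with respect to `PP` if `T = Tree(P_T) ∩ PP`. -/
def Tree.IsCompleteIn (T : Tree M) (PP : Set (Tile M)) : Prop :=
  T.tiles = cTree T.top ∩ PP

/-- `QQ` is an `α`-packing of the tree `T`: `QQ ⊆ T` and `Σ_{P ∈ QQ} |I_P| ≤ α|I_T|`. -/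
def IsPacking (α : ℝ) (QQ : Set (Tile M)) (T : Tree M) : Prop :=
  QQ ⊆ T.tiles ∧ (∑ᶠ P ∈ QQ, Tile.len P) ≤ α * T.len

/-- `QQ` is a uniform `α`-packing of the tree `T`:
`Σ_{P ∈ QQ, I_P ⊆ J} |I_P| ≤ α|J|` for every dyadic interval `J`. -/
def IsUniformPacking (α : ℝ) (QQ : Set (Tile M)) (T : Tree M) : Prop :=
  QQ ⊆ T.tiles ∧
    ∀ J : Tile M, (∑ᶠ P ∈ {P ∈ QQ | P.ival ⊆ J.ival}, Tile.len P) ≤ α * J.len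

/-- Left half of the spatial interval. -/
def Tile.left (P : Tile M) : Set ℝ :=
  Ico ((P.j : ℝ) * 2 ^ P.k) (((P.j : ℝ) + 1 / 2) * 2 ^ P.k)

/-- Right half of the spatial interval. -/
def Tile.right (P : Tile M) : Set ℝ :=
  Ico (((P.j : ℝ) + 1 / 2) * 2 ^ P.k) (((P.j : ℝ) + 1) * 2 ^ P.k)

/-- The (mother) Haar wavelet `φ_P = |I_P|^{-1/2}(χ_{I_l} - χ_{I_r})`. -/
def Tile.haar (P : Tile M) : ℝ → ℝ := fun x =>
  (Real.sqrt P.len)⁻¹ * (P.left.indicator 1 x - P.right.indicator 1 x)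

/-- The Haar (wavelet) coefficient `Wf(P) = ⟨f, φ_P⟩`. -/
def waveCoeff (f : ℝ → ℝ) (P : Tile M) : ℝ := ∫ x, f x * P.haar x

/-- The average `[f]_{I_P} = (1/|I_P|)∫_{I_P} f`. -/
def tileAvg (f : ℝ → ℝ) (P : Tile M) : ℝ := (∫ x in P.ival, f x) / P.len

/-- The mean `‖f‖_{mean(P)} = (1/|I_P|)∫_{I_P} |f|`. -/
def tileMean (f : ℝ → ℝ) (P : Tile M) : ℝ := (∫ x in P.ival, |f x|) / P.len

/-- The maximal mean `‖f‖_{mean*(PP)} = sup_{P ∈ PP} ‖f‖_{mean(P)}`. -/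
def maxMean (f : ℝ → ℝ) (PP : Set (Tile M)) : ℝ :=
  sSup (insert 0 (tileMean f '' PP))

/-- The dyadic BMO norm `‖f‖_{BMO} = ‖|Wf|²‖_{size*(PP⁺)}^{1/2}`. -/
def bmoNorm (M : ℕ) (f : ℝ → ℝ) : ℝ :=
  Real.sqrt (maxSize (fun P : Tile M => waveCoeff f P ^ 2) univ)

/-- The grid interval `[j·2^{-M}, (j+1)·2^{-M})` at the finest scale. -/
def gridIval (M : ℕ) (j : ℤ) : Set ℝ :=
  Ico ((j : ℝ) * 2 ^ (-(M : ℤ))) (((j : ℝ) + 1) * 2 ^ (-(M : ℤ)))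

/-- A dyadic test function: supported on `[0, 2^M)` and constant on every dyadic
interval of length `2^{-M}`. -/
def IsTestFun (M : ℕ) (f : ℝ → ℝ) : Prop :=
  (∀ x : ℝ, x ∉ Ico (0 : ℝ) (2 ^ (M : ℤ)) → f x = 0) ∧
    ∀ j : ℤ, ∀ x ∈ gridIval M j, ∀ y ∈ gridIval M j, f x = f y

/-- The `L²` norm. -/
def l2Norm (f : ℝ → ℝ) : ℝ := Real.sqrt (∫ x, f x ^ 2)

/-- The `L^∞` norm (as a supremum of values; adequate for test functions). -/
def supNorm (f : ℝ → ℝ) : ℝ := ⨆ x : ℝ, |f x|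

/-- The weak `L^r` quasinorm `sup_{λ>0} λ |{|h| ≥ λ}|^{1/r}`. -/
def weakNorm (r : ℝ) (h : ℝ → ℝ) : ℝ :=
  sSup {s : ℝ | ∃ l : ℝ, 0 < l ∧ s = l * (volume {x : ℝ | l ≤ |h x|}).toReal ^ (1 / r)}

/-- The phase space projection `Π_T f = Σ_{P ∈ T} ⟨f, φ_P⟩ φ_P` onto a tree. -/
def treeProj (T : Tree M) (f : ℝ → ℝ) : ℝ → ℝ := fun x =>
  ∑ᶠ P ∈ T.tiles, waveCoeff f P * P.haar x

/-- The high-low paraproduct `π_hl(f,g) = Σ_P Wf(P) [g]_P φ_P`. -/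
def paraHL (M : ℕ) (f g : ℝ → ℝ) : ℝ → ℝ := fun x =>
  ∑ᶠ P : Tile M, waveCoeff f P * tileAvg g P * P.haar x

/-- The low-high paraproduct `π_lh(f,g) = Σ_P [f]_P Wg(P) φ_P`. -/
def paraLH (M : ℕ) (f g : ℝ → ℝ) : ℝ → ℝ := fun x =>
  ∑ᶠ P : Tile M, tileAvg f P * waveCoeff g P * P.haar x

/-- The high-high paraproduct `π_hh(f,g) = Σ_P Wf(P) Wg(P) χ_{I_P}/|I_P|`. -/
def paraHH (M : ℕ) (f g : ℝ → ℝ) : ℝ → ℝ := fun x =>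
  ∑ᶠ P : Tile M, waveCoeff f P * waveCoeff g P * P.ival.indicator 1 x / P.len

/-- The constant function `1` on `[0, 2^M)`. -/
def oneFn (M : ℕ) : ℝ → ℝ := (Ico (0 : ℝ) (2 ^ (M : ℤ))).indicator 1

/-- A perfect dyadic Calderón–Zygmund operator, recorded via its kernel `K` and
kernel constant `A₀`. -/
structure PDCZ (M : ℕ) where
  K : ℝ → ℝ → ℝ
  A₀ : ℝ
  hA₀ : 0 < A₀
  meas : Measurable (Function.uncurry K)
  bound : ∀ x y : ℝ, x ≠ y → |K x y| ≤ A₀ / |x - y|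
  perfectX : ∀ I J : Tile M, Disjoint I.ival J.ival →
    ∀ x ∈ I.ival, ∀ x' ∈ I.ival, ∀ y ∈ J.ival, K x y = K x' y
  perfectY : ∀ I J : Tile M, Disjoint I.ival J.ival →
    ∀ x ∈ I.ival, ∀ x' ∈ I.ival, ∀ y ∈ J.ival, K y x = K y x'
  diag : ∀ I : Tile M, I.k = -(M : ℤ) → ∀ x ∈ I.ival, ∀ y ∈ I.ival, K x y = 0
  corner₁ : ∀ x ∈ Ico (0 : ℝ) (2 ^ ((M : ℤ) - 1)),
    ∀ y ∈ Ico ((2 : ℝ) ^ ((M : ℤ) - 1)) (2 ^ (M : ℤ)), K x y = 0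
  corner₂ : ∀ x ∈ Ico ((2 : ℝ) ^ ((M : ℤ) - 1)) (2 ^ (M : ℤ)),
    ∀ y ∈ Ico (0 : ℝ) (2 ^ ((M : ℤ) - 1)), K x y = 0

/-- `Tf(x) = ∫ K(x,y) f(y) dy`. -/
def PDCZ.app (Op : PDCZ M) (f : ℝ → ℝ) : ℝ → ℝ := fun x => ∫ y, Op.K x y * f y

/-- The transpose `T*f(x) = ∫ K(y,x) f(y) dy`. -/
def PDCZ.appT (Op : PDCZ M) (f : ℝ → ℝ) : ℝ → ℝ := fun x => ∫ y, Op.K y x * f y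

/-- Complex-valued Haar coefficient. -/
def waveCoeffC (b : ℝ → ℂ) (P : Tile M) : ℂ := ∫ x, b x * (P.haar x : ℂ)

/-- Complex-valued average. -/
def tileAvgC (b : ℝ → ℂ) (P : Tile M) : ℂ := (∫ x in P.ival, b x) / (P.len : ℂ)

/-- BMO norm of a complex-valued function. -/
def bmoNormC (M : ℕ) (b : ℝ → ℂ) : ℝ :=
  Real.sqrt (maxSize (fun P : Tile M => ‖waveCoeffC b P‖ ^ 2) univ)

/-- Complex-valued dyadic test functions. -/
def IsTestFunC (M : ℕ) (b : ℝ → ℂ) : Prop :=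
  (∀ x : ℝ, x ∉ Ico (0 : ℝ) (2 ^ (M : ℤ)) → b x = 0) ∧
    ∀ j : ℤ, ∀ x ∈ gridIval M j, ∀ y ∈ gridIval M j, b x = b y

/-- The operator applied to a complex-valued function. -/
def PDCZ.appC (Op : PDCZ M) (b : ℝ → ℂ) : ℝ → ℂ := fun x => ∫ y, (Op.K x y : ℂ) * b y


/-!
The Haar functions `φ_P` are orthonormal, so the `L²` norm of a Haar series is the `ℓ²` norm of its
coefficients and Bessel's inequality gives `Σ_P |Wf(P)|² ≤ ‖f‖₂²`. For `π_hl` the coefficients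
`Wf(P) [g]_P` are at most `‖g‖_∞ |Wf(P)|`. For `π_lh` the BMO condition says that
`a_P = |Wg(P)|²` is a Carleson sequence, `Σ_{P ≤ J} a_P ≤ ‖g‖²_BMO |I_J|`, and the dyadic Carleson
embedding `Σ_P a_P [f]_P² ≤ 4 ‖g‖²_BMO ‖f‖₂²` follows by induction on scales with the Bellman
function `4 (∫_J f² - |I_J|² [f]_J² / (|I_J| + Σ_{P ≤ J} a_P))`. For `π_hh` one tests
`F = π_hh(f,g)` against itself: `‖F‖₂² = Σ_P Wf(P) Wg(P) [F]_P ≤ ‖f‖₂ (Σ_P |Wg(P)|² [F]_P²)^{1/2}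
≤ 2 ‖g‖_BMO ‖f‖₂ ‖F‖₂`. All three bounds hold with `C = 2`.
-/

open scoped Classical

/-! ### Dyadic tiles -/

lemma Ico_int_mul_subset_or_disjoint {s : ℝ} (hs : 0 < s) (a b c : ℤ) :
    Ico (a * s) ((a + 1) * s) ⊆ Ico (b * s) (c * s) ∨
      Disjoint (Ico (a * s) ((a + 1) * s)) (Ico (b * s) (c * s)) := by
  have cast_le {m n : ℤ} (h : m ≤ n) : (m : ℝ) * s ≤ n * s :=
    mul_le_mul_of_nonneg_right (by exact_mod_cast h) hs.le
  rcases lt_or_ge a b with hab | hba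
  · have hab' : ((a : ℝ) + 1) * s ≤ b * s := by exact_mod_cast cast_le (show a + 1 ≤ b by omega)
    exact .inr (Ico_disjoint_Ico.2 ((min_le_left _ _).trans (hab'.trans (le_max_right _ _))))
  rcases le_or_gt c a with hca | hac
  · exact .inr (Ico_disjoint_Ico.2
      ((min_le_right _ _).trans ((cast_le hca).trans (le_max_left _ _))))
  · have hac' : ((a : ℝ) + 1) * s ≤ c * s := by exact_mod_cast cast_le (show a + 1 ≤ c by omega)
    exact .inl (Ico_subset_Ico (cast_le hba) hac')

namespace Tile

variable (P : Tile M)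

lemma len_pos : 0 < P.len := zpow_pos two_pos _

lemma lower_lt_upper : (P.j : ℝ) * 2 ^ P.k < ((P.j : ℝ) + 1) * 2 ^ P.k :=
  mul_lt_mul_of_pos_right (lt_add_one _) P.len_pos

lemma ival_nonempty : P.ival.Nonempty := nonempty_Ico.2 P.lower_lt_upper

lemma measurableSet_ival : MeasurableSet P.ival := measurableSet_Ico

lemma volume_ival : volume P.ival = ENNReal.ofReal P.len := by
  rw [Tile.ival, Real.volume_Ico, Tile.len]; ring_nf

lemma volume_ival_ne_top : volume P.ival ≠ ⊤ := measure_Ico_lt_top.ne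

lemma ival_subset_base : P.ival ⊆ Ico 0 (2 ^ (M : ℤ)) :=
  Ico_subset_Ico (mul_nonneg (by exact_mod_cast P.hj) P.len_pos.le) P.hsub

lemma left_union_right : P.left ∪ P.right = P.ival := by
  have := P.len_pos
  unfold Tile.len at this
  exact Ico_union_Ico_eq_Ico (by nlinarith) (by nlinarith)

lemma disjoint_left_right : Disjoint P.left P.right := Ico_disjoint_Ico_same

lemma left_subset_ival : P.left ⊆ P.ival := P.left_union_right ▸ subset_union_left

lemma right_subset_ival : P.right ⊆ P.ival := P.left_union_right ▸ subset_union_right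

lemma measurableSet_left : MeasurableSet P.left := measurableSet_Ico

lemma measurableSet_right : MeasurableSet P.right := measurableSet_Ico

lemma volume_left : volume P.left = ENNReal.ofReal (P.len / 2) := by
  rw [Tile.left, Real.volume_Ico, Tile.len]; ring_nf

lemma volume_right : volume P.right = ENNReal.ofReal (P.len / 2) := by
  rw [Tile.right, Real.volume_Ico, Tile.len]; ring_nf

lemma le_refl : P.le P := subset_refl _

lemma ext_of_j_k {P Q : Tile M} (hj : P.j = Q.j) (hk : P.k = Q.k) : P = Q := by
  cases P; cases Q; simp_all

lemma le_or_disjoint_of_k_le {P Q : Tile M} (hk : P.k ≤ Q.k) :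
    P.le Q ∨ Disjoint P.ival Q.ival := by
  obtain ⟨d, hd⟩ := Int.le.dest hk
  have hQ : Q.ival =
      Ico (((Q.j * 2 ^ d : ℤ) : ℝ) * 2 ^ P.k) ((((Q.j + 1) * 2 ^ d : ℤ) : ℝ) * 2 ^ P.k) := by
    rw [Tile.ival, ← hd, zpow_add₀ two_ne_zero, zpow_natCast]
    push_cast; ring_nf
  rw [Tile.le, hQ, Tile.ival]
  exact Ico_int_mul_subset_or_disjoint (zpow_pos two_pos _) _ _ _

lemma k_le_of_le {P Q : Tile M} (h : P.le Q) : P.k ≤ Q.k := by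
  have hvol := measure_mono (μ := volume) h
  rw [volume_ival, volume_ival, ENNReal.ofReal_le_ofReal_iff Q.len_pos.le] at hvol
  exact (zpow_le_zpow_iff_right₀ one_lt_two).1 hvol

lemma eq_of_le_of_k_eq {P Q : Tile M} (h : P.le Q) (hk : P.k = Q.k) : P = Q := by
  rw [Tile.le, Tile.ival, Tile.ival, Ico_subset_Ico_iff P.lower_lt_upper, hk] at h
  have h₁ : (Q.j : ℝ) ≤ P.j := le_of_mul_le_mul_right h.1 Q.len_pos
  have h₂ : (P.j : ℝ) + 1 ≤ Q.j + 1 := le_of_mul_le_mul_right h.2 Q.len_pos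
  exact ext_of_j_k (le_antisymm (by exact_mod_cast (by linarith : (P.j : ℝ) ≤ Q.j))
    (by exact_mod_cast h₁)) hk

lemma k_lt_of_le_of_ne {P Q : Tile M} (h : P.le Q) (hne : P ≠ Q) : P.k < Q.k :=
  (k_le_of_le h).lt_of_ne fun hk => hne (eq_of_le_of_k_eq h hk)

def childL (h : -(M : ℤ) < P.k) : Tile M where
  j := 2 * P.j
  k := P.k - 1
  hk_lb := by omega
  hk_ub := by have := P.hk_ub; omega
  hj := by have := P.hj; omega
  hsub := by
    refine le_trans ?_ P.hsub
    rw [zpow_sub_one₀ two_ne_zero]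
    have := P.len_pos
    unfold Tile.len at this
    push_cast
    nlinarith

def childR (h : -(M : ℤ) < P.k) : Tile M where
  j := 2 * P.j + 1
  k := P.k - 1
  hk_lb := by omega
  hk_ub := by have := P.hk_ub; omega
  hj := by have := P.hj; omega
  hsub := by
    refine le_of_eq_of_le ?_ P.hsub
    rw [zpow_sub_one₀ two_ne_zero]
    push_cast; ring

section children

variable (h : -(M : ℤ) < P.k)

lemma ival_childL : (P.childL h).ival = P.left := by
  rw [Tile.ival, Tile.left, childL, zpow_sub_one₀ two_ne_zero]
  push_cast; ring_nf

lemma ival_childR : (P.childR h).ival = P.right := by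
  rw [Tile.ival, Tile.right, childR, zpow_sub_one₀ two_ne_zero]
  push_cast; ring_nf

lemma k_childL : (P.childL h).k = P.k - 1 := rfl

lemma k_childR : (P.childR h).k = P.k - 1 := rfl

lemma len_childL : (P.childL h).len = P.len / 2 :=
  (zpow_sub_one₀ two_ne_zero _).trans (div_eq_mul_inv _ _).symm

lemma len_childR : (P.childR h).len = P.len / 2 :=
  (zpow_sub_one₀ two_ne_zero _).trans (div_eq_mul_inv _ _).symm

end children

lemma le_childL_or_le_childR {P Q : Tile M} (hPQ : P.le Q) (hne : P ≠ Q) :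
    ∃ h : -(M : ℤ) < Q.k, P.le (Q.childL h) ∨ P.le (Q.childR h) := by
  have hk := k_lt_of_le_of_ne hPQ hne
  have h : -(M : ℤ) < Q.k := P.hk_lb.trans_lt hk
  refine ⟨h, ?_⟩
  rcases le_or_disjoint_of_k_le (P := P) (Q := Q.childL h) (by rw [k_childL]; omega) with hL | hL
  · exact .inl hL
  rcases le_or_disjoint_of_k_le (P := P) (Q := Q.childR h) (by rw [k_childR]; omega) with hR | hR
  · exact .inr hR
  obtain ⟨x, hx⟩ := P.ival_nonempty
  rw [ival_childL] at hL
  rw [ival_childR] at hR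
  rcases (Q.left_union_right ▸ hPQ hx : x ∈ Q.left ∪ Q.right) with hxL | hxR
  exacts [(disjoint_left.1 hL hx hxL).elim, (disjoint_left.1 hR hx hxR).elim]

lemma ival_subset_left_or_right {P Q : Tile M} (hPQ : P.le Q) (hne : P ≠ Q) :
    P.ival ⊆ Q.left ∨ P.ival ⊆ Q.right := by
  obtain ⟨h, hL | hR⟩ := le_childL_or_le_childR hPQ hne
  exacts [.inl (Q.ival_childL h ▸ hL), .inr (Q.ival_childR h ▸ hR)]

lemma j_lt_four_pow (P : Tile M) : P.j < 4 ^ M := by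
  have hj : (P.j : ℝ) * 2 ^ (-(M : ℤ)) < 2 ^ (M : ℤ) :=
    calc (P.j : ℝ) * 2 ^ (-(M : ℤ)) ≤ P.j * 2 ^ P.k :=
          mul_le_mul_of_nonneg_left (zpow_le_zpow_right₀ one_le_two P.hk_lb)
            (by exact_mod_cast P.hj)
      _ < (P.j + 1) * 2 ^ P.k := P.lower_lt_upper
      _ ≤ 2 ^ (M : ℤ) := P.hsub
  have h4 : (4 : ℝ) ^ M = 2 ^ (M : ℤ) / 2 ^ (-(M : ℤ)) := by
    rw [zpow_neg, div_inv_eq_mul, zpow_natCast, ← mul_pow]; norm_num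
  exact_mod_cast (lt_div_iff₀ (zpow_pos two_pos _)).2 hj |>.trans_eq h4.symm

instance : Finite (Tile M) :=
  Finite.of_injective
    (fun P : Tile M =>
      ((⟨P.j, Finset.mem_Ico.2 ⟨P.hj, P.j_lt_four_pow⟩⟩ : Finset.Ico (0 : ℤ) (4 ^ M)),
        (⟨P.k, Finset.mem_Icc.2 ⟨P.hk_lb, P.hk_ub⟩⟩ : Finset.Icc (-(M : ℤ)) M)))
    fun _ _ h => ext_of_j_k (congrArg (fun x => (x.1 : ℤ)) h) (congrArg (fun x => (x.2 : ℤ)) h)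

noncomputable instance : Fintype (Tile M) := Fintype.ofFinite _

end Tile

def topTile (M : ℕ) : Tile M where
  j := 0
  k := M
  hk_lb := by omega
  hk_ub := le_rfl
  hj := le_rfl
  hsub := by norm_num

lemma ival_topTile : (topTile M).ival = Ico 0 (2 ^ (M : ℤ)) := by
  simp [Tile.ival, topTile]

lemma le_topTile (P : Tile M) : P.le (topTile M) := by
  rw [Tile.le, ival_topTile]; exact P.ival_subset_base

def tilesUnder (J : Tile M) : Finset (Tile M) := {P | P.le J}

@[simp]
lemma mem_tilesUnder {P J : Tile M} : P ∈ tilesUnder J ↔ P.le J := by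
  simp [tilesUnder]

lemma tilesUnder_topTile : tilesUnder (topTile M) = Finset.univ := by
  ext P; simp [le_topTile]

lemma tilesUnder_of_k_eq {J : Tile M} (h : J.k = -(M : ℤ)) : tilesUnder J = {J} := by
  ext P
  simp only [mem_tilesUnder, Finset.mem_singleton]
  refine ⟨fun hP => by_contra fun hne => ?_, fun hP => hP ▸ J.le_refl⟩
  have := Tile.k_lt_of_le_of_ne hP hne
  have := P.hk_lb
  omega

lemma tilesUnder_eq_insert_union {J : Tile M} (h : -(M : ℤ) < J.k) :
    tilesUnder J = insert J (tilesUnder (J.childL h) ∪ tilesUnder (J.childR h)) := by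
  ext P
  simp only [mem_tilesUnder, Finset.mem_insert, Finset.mem_union]
  refine ⟨fun hP => ?_, ?_⟩
  · by_cases hne : P = J
    · exact .inl hne
    obtain ⟨_, hLR⟩ := Tile.le_childL_or_le_childR hP hne
    exact .inr hLR
  · rintro (rfl | hL | hR)
    · exact P.le_refl
    · rw [Tile.le, Tile.ival_childL] at hL; exact hL.trans J.left_subset_ival
    · rw [Tile.le, Tile.ival_childR] at hR; exact hR.trans J.right_subset_ival

lemma sum_tilesUnder_eq_add {J : Tile M} (h : -(M : ℤ) < J.k) (u : Tile M → ℝ) :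
    ∑ P ∈ tilesUnder J, u P =
      u J + ∑ P ∈ tilesUnder (J.childL h), u P + ∑ P ∈ tilesUnder (J.childR h), u P := by
  have hk (P : Tile M) (hP : P.le (J.childL h) ∨ P.le (J.childR h)) : P.k < J.k := by
    rcases hP with hP | hP <;> have := Tile.k_le_of_le hP
    · rw [Tile.k_childL] at this; omega
    · rw [Tile.k_childR] at this; omega
  have hdisj : Disjoint (tilesUnder (J.childL h)) (tilesUnder (J.childR h)) := by
    refine Finset.disjoint_left.2 fun P hL hR => ?_
    obtain ⟨x, hx⟩ := P.ival_nonempty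
    rw [mem_tilesUnder, Tile.le, Tile.ival_childL] at hL
    rw [mem_tilesUnder, Tile.le, Tile.ival_childR] at hR
    exact disjoint_left.1 J.disjoint_left_right (hL hx) (hR hx)
  have hJ : J ∉ tilesUnder (J.childL h) ∪ tilesUnder (J.childR h) := by
    intro hJ
    rw [Finset.mem_union, mem_tilesUnder, mem_tilesUnder] at hJ
    exact (hk J hJ).false
  rw [tilesUnder_eq_insert_union h, Finset.sum_insert hJ, Finset.sum_union hdisj]
  ring

/-! ### Test functions -/

def IsBddMeasurable (f : ℝ → ℝ) : Prop := Measurable f ∧ ∃ B, ∀ x, |f x| ≤ B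

namespace IsBddMeasurable

variable {f g : ℝ → ℝ}

lemma integrableOn (hf : IsBddMeasurable f) {s : Set ℝ} (hs : volume s ≠ ⊤) :
    IntegrableOn f s :=
  let ⟨hm, _, hB⟩ := hf
  Measure.integrableOn_of_bounded hs hm.aestronglyMeasurable (.of_forall hB)

lemma integrable_of_support_subset (hf : IsBddMeasurable f) {s : Set ℝ} (hs : volume s ≠ ⊤)
    (hsupp : Function.support f ⊆ s) : Integrable f :=
  (hf.integrableOn hs).integrable_of_forall_notMem_eq_zero
    fun _ hx => Function.notMem_support.1 fun h => hx (hsupp h)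

lemma mul (hf : IsBddMeasurable f) (hg : IsBddMeasurable g) :
    IsBddMeasurable (fun x => f x * g x) :=
  let ⟨hmf, _, hBf⟩ := hf
  let ⟨hmg, _, hBg⟩ := hg
  ⟨hmf.mul hmg, _, fun x => (abs_mul _ _).trans_le
    (mul_le_mul (hBf x) (hBg x) (abs_nonneg _) ((abs_nonneg _).trans (hBf x)))⟩

lemma sub (hf : IsBddMeasurable f) (hg : IsBddMeasurable g) :
    IsBddMeasurable (fun x => f x - g x) :=
  let ⟨hmf, _, hBf⟩ := hf
  let ⟨hmg, _, hBg⟩ := hg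
  ⟨hmf.sub hmg, _, fun x => (abs_sub _ _).trans (add_le_add (hBf x) (hBg x))⟩

lemma sq (hf : IsBddMeasurable f) : IsBddMeasurable (fun x => f x ^ 2) := by
  simpa only [_root_.sq] using hf.mul hf

lemma const_mul (hf : IsBddMeasurable f) (c : ℝ) : IsBddMeasurable (fun x => c * f x) :=
  (show IsBddMeasurable fun _ => c from ⟨measurable_const, |c|, fun _ => le_rfl⟩).mul hf

lemma finsetSum {ι : Type*} (s : Finset ι) {f : ι → ℝ → ℝ}
    (hf : ∀ i ∈ s, IsBddMeasurable (f i)) : IsBddMeasurable (fun x => ∑ i ∈ s, f i x) := by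
  refine ⟨Finset.measurable_sum s fun i hi => (hf i hi).1, ?_⟩
  choose B hB using fun i (hi : i ∈ s) => (hf i hi).2
  exact ⟨∑ i ∈ s.attach, B i i.2, fun x => (Finset.abs_sum_le_sum_abs _ _).trans
    (by rw [← Finset.sum_attach]; exact Finset.sum_le_sum fun i _ => hB i i.2 x)⟩

lemma indicator_one {s : Set ℝ} (hs : MeasurableSet s) :
    IsBddMeasurable (s.indicator 1) :=
  ⟨measurable_const.indicator hs, 1, fun x => by
    by_cases hx : x ∈ s <;> simp [hx]⟩

end IsBddMeasurable

lemma mem_gridIval_floor (x : ℝ) : x ∈ gridIval M ⌊x * 2 ^ (M : ℤ)⌋ := by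
  have h := zpow_pos (two_pos : (0 : ℝ) < 2) (M : ℤ)
  rw [gridIval, zpow_neg, ← div_eq_mul_inv, ← div_eq_mul_inv, mem_Ico, div_le_iff₀ h,
    lt_div_iff₀ h]
  exact ⟨Int.floor_le _, Int.lt_floor_add_one _⟩

lemma IsTestFun.eq_comp_floor {f : ℝ → ℝ} (hf : IsTestFun M f) (x : ℝ) :
    f x = f (⌊x * 2 ^ (M : ℤ)⌋ * 2 ^ (-(M : ℤ))) := by
  have hj : ⌊((⌊x * 2 ^ (M : ℤ)⌋ : ℝ) * 2 ^ (-(M : ℤ))) * 2 ^ (M : ℤ)⌋ =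
      ⌊x * 2 ^ (M : ℤ)⌋ := by
    rw [_root_.mul_assoc, ← zpow_add₀ two_ne_zero, _root_.neg_add_cancel, zpow_zero,
      _root_.mul_one, Int.floor_intCast]
  refine hf.2 _ x (mem_gridIval_floor x) _ ?_
  simpa only [hj] using mem_gridIval_floor (M := M) ((⌊x * 2 ^ (M : ℤ)⌋ : ℝ) * 2 ^ (-(M : ℤ)))

lemma IsTestFun.isBddMeasurable {f : ℝ → ℝ} (hf : IsTestFun M f) : IsBddMeasurable f := by
  set v : ℤ → ℝ := fun j => f (j * 2 ^ (-(M : ℤ)))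
  have hfv : f = v ∘ fun x => ⌊x * 2 ^ (M : ℤ)⌋ := funext hf.eq_comp_floor
  refine ⟨hfv ▸ measurable_from_top.comp (Int.measurable_floor.comp (measurable_mul_const _)),
    ∑ j ∈ Finset.Ico 0 (4 ^ M), |v j|, fun x => ?_⟩
  by_cases hx : x ∈ Ico 0 (2 ^ (M : ℤ))
  · have h2 : (0 : ℝ) < 2 ^ (M : ℤ) := zpow_pos two_pos _
    have hj : ⌊x * 2 ^ (M : ℤ)⌋ ∈ Finset.Ico 0 (4 ^ M) := by
      refine Finset.mem_Ico.2 ⟨Int.floor_nonneg.2 (mul_nonneg hx.1 h2.le), Int.floor_lt.2 ?_⟩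
      calc x * 2 ^ (M : ℤ) < 2 ^ (M : ℤ) * 2 ^ (M : ℤ) := mul_lt_mul_of_pos_right hx.2 h2
        _ = ((4 ^ M : ℤ) : ℝ) := by push_cast; rw [zpow_natCast, ← mul_pow]; norm_num
    rw [hfv]
    exact Finset.single_le_sum (f := fun j => |v j|) (fun _ _ => abs_nonneg _) hj
  · rw [hf.1 x hx, abs_zero]
    exact Finset.sum_nonneg fun _ _ => abs_nonneg _

lemma IsTestFun.support_subset {f : ℝ → ℝ} (hf : IsTestFun M f) :
    Function.support f ⊆ Ico 0 (2 ^ (M : ℤ)) :=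
  Function.support_subset_iff'.2 hf.1

lemma IsTestFun.integrable_sq {f : ℝ → ℝ} (hf : IsTestFun M f) :
    Integrable fun x => f x ^ 2 :=
  hf.isBddMeasurable.sq.integrable_of_support_subset measure_Ico_lt_top.ne
    ((Function.support_pow f two_ne_zero).trans_subset hf.support_subset)

lemma IsTestFun.bddAbove_abs {f : ℝ → ℝ} (hf : IsTestFun M f) :
    BddAbove (range fun x => |f x|) :=
  let ⟨_, B, hB⟩ := hf.isBddMeasurable
  ⟨B, forall_mem_range.2 hB⟩

/-! ### Haar functions -/

namespace Tile

variable (P : Tile M)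

lemma haar_eq_zero_of_notMem {x : ℝ} (hx : x ∉ P.ival) : P.haar x = 0 := by
  rw [Tile.haar, indicator_of_notMem fun h => hx (P.left_subset_ival h),
    indicator_of_notMem fun h => hx (P.right_subset_ival h), sub_zero, mul_zero]

lemma support_haar_subset : Function.support P.haar ⊆ P.ival :=
  Function.support_subset_iff'.2 fun _ => P.haar_eq_zero_of_notMem

lemma isBddMeasurable_haar : IsBddMeasurable P.haar :=
  ((IsBddMeasurable.indicator_one P.measurableSet_left).sub
    (IsBddMeasurable.indicator_one P.measurableSet_right)).const_mul _

lemma integrable_mul_haar {u : ℝ → ℝ} (hu : IsBddMeasurable u) :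
    Integrable (fun x => u x * P.haar x) :=
  (hu.mul P.isBddMeasurable_haar).integrable_of_support_subset P.volume_ival_ne_top
    ((Function.support_mul_subset_right _ _).trans P.support_haar_subset)

lemma integral_haar : ∫ x, P.haar x = 0 := by
  have hint {s : Set ℝ} (hs : MeasurableSet s) (hv : volume s ≠ ⊤) :
      Integrable (s.indicator (1 : ℝ → ℝ)) :=
    (integrable_indicator_iff hs).2 (integrableOn_const hv)
  simp only [Tile.haar]
  rw [integral_const_mul, integral_sub (hint P.measurableSet_left measure_Ico_lt_top.ne)
    (hint P.measurableSet_right measure_Ico_lt_top.ne),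
    integral_indicator_one P.measurableSet_left, integral_indicator_one P.measurableSet_right,
    measureReal_def, measureReal_def, P.volume_left, P.volume_right, sub_self, mul_zero]

lemma haar_mul_self (x : ℝ) : P.haar x * P.haar x = P.len⁻¹ * P.ival.indicator 1 x := by
  have hsq : (√P.len)⁻¹ * (√P.len)⁻¹ = P.len⁻¹ := by
    rw [← mul_inv, Real.mul_self_sqrt P.len_pos.le]
  simp only [Tile.haar, ← P.left_union_right]
  by_cases hl : x ∈ P.left
  · have hr : x ∉ P.right := disjoint_left.1 P.disjoint_left_right hl
    simp [hl, hr, hsq]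
  · by_cases hr : x ∈ P.right
    · simp [hl, hr, hsq]
    · simp [hl, hr]

lemma integral_haar_mul_self : ∫ x, P.haar x * P.haar x = 1 := by
  simp only [haar_mul_self]
  rw [integral_const_mul, integral_indicator_one P.measurableSet_ival, measureReal_def,
    P.volume_ival, ENNReal.toReal_ofReal P.len_pos.le, inv_mul_cancel₀ P.len_pos.ne']

lemma integral_mul_haar_of_eqOn {u : ℝ → ℝ} {c : ℝ} (hu : EqOn u (fun _ => c) P.ival) :
    ∫ x, u x * P.haar x = 0 := by
  have heq : (fun x => u x * P.haar x) = fun x => c * P.haar x := by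
    funext x
    by_cases hx : x ∈ P.ival
    · rw [hu hx]
    · rw [P.haar_eq_zero_of_notMem hx, mul_zero, mul_zero]
  rw [heq, integral_const_mul, P.integral_haar, mul_zero]

/-- The larger Haar function is constant on the smaller tile. -/
lemma integral_haar_mul_haar_of_le {P Q : Tile M} (hPQ : P.le Q) (hne : P ≠ Q) :
    ∫ x, Q.haar x * P.haar x = 0 := by
  rcases ival_subset_left_or_right hPQ hne with hL | hR
  · refine P.integral_mul_haar_of_eqOn (c := (√Q.len)⁻¹) fun x hx => ?_
    have hr : x ∉ Q.right := disjoint_left.1 Q.disjoint_left_right (hL hx)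
    simp [Tile.haar, hL hx, hr]
  · refine P.integral_mul_haar_of_eqOn (c := -(√Q.len)⁻¹) fun x hx => ?_
    have hl : x ∉ Q.left := disjoint_right.1 Q.disjoint_left_right (hR hx)
    simp [Tile.haar, hR hx, hl]

lemma integral_haar_mul_haar_of_k_le {P Q : Tile M} (hne : P ≠ Q) (hk : P.k ≤ Q.k) :
    ∫ x, Q.haar x * P.haar x = 0 := by
  rcases le_or_disjoint_of_k_le hk with hPQ | hPQ
  · exact integral_haar_mul_haar_of_le hPQ hne
  refine integral_eq_zero_of_ae (.of_forall fun x => ?_)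
  by_cases hx : x ∈ P.ival
  · simp [Q.haar_eq_zero_of_notMem (disjoint_left.1 hPQ hx)]
  · simp [P.haar_eq_zero_of_notMem hx]

lemma integral_haar_mul_haar (P Q : Tile M) :
    ∫ x, P.haar x * Q.haar x = if P = Q then 1 else 0 := by
  split_ifs with h
  · exact h ▸ P.integral_haar_mul_self
  rcases le_total P.k Q.k with hk | hk
  · simp_rw [_root_.mul_comm (P.haar _)]
    exact integral_haar_mul_haar_of_k_le h hk
  · exact integral_haar_mul_haar_of_k_le (Ne.symm h) hk

end Tile

def haarSeries (c : Tile M → ℝ) : ℝ → ℝ := fun x => ∑ P, c P * P.haar x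

lemma isBddMeasurable_haarSeries (c : Tile M → ℝ) : IsBddMeasurable (haarSeries c) :=
  IsBddMeasurable.finsetSum _ fun P _ => P.isBddMeasurable_haar.const_mul (c P)

lemma mul_haarSeries (u : ℝ → ℝ) (c : Tile M → ℝ) (x : ℝ) :
    u x * haarSeries c x = ∑ P, c P * (u x * P.haar x) := by
  simp only [haarSeries, Finset.mul_sum, mul_left_comm]

lemma integrable_mul_haarSeries {u : ℝ → ℝ} (hu : IsBddMeasurable u) (c : Tile M → ℝ) :
    Integrable fun x => u x * haarSeries c x := by
  simp only [mul_haarSeries]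
  exact integrable_finsetSum _ fun P _ => (P.integrable_mul_haar hu).const_mul (c P)

lemma integral_mul_haarSeries {u : ℝ → ℝ} (hu : IsBddMeasurable u) (c : Tile M → ℝ) :
    ∫ x, u x * haarSeries c x = ∑ P, c P * ∫ x, u x * P.haar x := by
  simp only [mul_haarSeries]
  rw [integral_finsetSum _ fun P _ => (P.integrable_mul_haar hu).const_mul (c P)]
  simp only [integral_const_mul]

lemma integral_haar_mul_haarSeries (Q : Tile M) (c : Tile M → ℝ) :
    ∫ x, Q.haar x * haarSeries c x = c Q := by
  simp [integral_mul_haarSeries Q.isBddMeasurable_haar, Tile.integral_haar_mul_haar]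

lemma integral_haarSeries_sq (c : Tile M → ℝ) :
    ∫ x, haarSeries c x ^ 2 = ∑ P, c P ^ 2 := by
  simp only [sq, integral_mul_haarSeries (isBddMeasurable_haarSeries c)]
  simp_rw [_root_.mul_comm (haarSeries c _), integral_haar_mul_haarSeries]

lemma l2Norm_haarSeries (c : Tile M → ℝ) : l2Norm (haarSeries c) = √(∑ P, c P ^ 2) := by
  rw [l2Norm, integral_haarSeries_sq]

theorem sum_sq_waveCoeff_le {f : ℝ → ℝ} (hf : IsBddMeasurable f)
    (hf2 : Integrable fun x => f x ^ 2) :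
    ∑ P : Tile M, waveCoeff f P ^ 2 ≤ ∫ x, f x ^ 2 := by
  have hfG : ∫ x, f x * haarSeries (waveCoeff (M := M) f) x =
      ∑ P : Tile M, waveCoeff f P ^ 2 := by
    rw [integral_mul_haarSeries hf]
    simp only [waveCoeff, sq]
  have hG2 := integral_haarSeries_sq (waveCoeff (M := M) f)
  have hfG_int : Integrable fun x => 2 * (f x * haarSeries (waveCoeff (M := M) f) x) :=
    (integrable_mul_haarSeries hf _).const_mul 2
  have hG2_int : Integrable fun x => haarSeries (waveCoeff (M := M) f) x ^ 2 := by
    simpa only [sq] using integrable_mul_haarSeries (isBddMeasurable_haarSeries _) _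
  generalize haarSeries (waveCoeff (M := M) f) = G at *
  have hexpand :
      ∫ x, (f x - G x) ^ 2 = (∫ x, f x ^ 2) - 2 * (∫ x, f x * G x) + ∫ x, G x ^ 2 := by
    simp_rw [sub_sq, _root_.mul_assoc]
    rw [integral_add (f := fun x => f x ^ 2 - 2 * (f x * G x)) (hf2.sub hfG_int) hG2_int,
      integral_sub hf2 hfG_int, integral_const_mul]
  have : 0 ≤ ∫ x, (f x - G x) ^ 2 := integral_nonneg fun x => sq_nonneg (f x - G x)
  rw [hexpand, hfG, hG2] at this
  linarith

/-! ### The dyadic Carleson embedding -/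

lemma setIntegral_ival_eq_add {h : ℝ → ℝ} {J : Tile M} (hh : IntegrableOn h J.ival)
    (hk : -(M : ℤ) < J.k) :
    ∫ x in J.ival, h x = (∫ x in (J.childL hk).ival, h x) + ∫ x in (J.childR hk).ival, h x := by
  rw [J.ival_childL, J.ival_childR, ← setIntegral_union J.disjoint_left_right
    J.measurableSet_right (hh.mono_set J.left_subset_ival) (hh.mono_set J.right_subset_ival),
    J.left_union_right]

lemma tileAvg_eq_add {h : ℝ → ℝ} {J : Tile M} (hh : IntegrableOn h J.ival)
    (hk : -(M : ℤ) < J.k) :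
    tileAvg h J = (tileAvg h (J.childL hk) + tileAvg h (J.childR hk)) / 2 := by
  rw [tileAvg, tileAvg, tileAvg, setIntegral_ival_eq_add hh hk, J.len_childL, J.len_childR]
  field_simp

lemma tileAvg_mul_len (h : ℝ → ℝ) (P : Tile M) : tileAvg h P * P.len = ∫ x in P.ival, h x :=
  div_mul_cancel₀ _ P.len_pos.ne'

lemma len_mul_sq_tileAvg_le {h : ℝ → ℝ} (hh : IsBddMeasurable h) (P : Tile M) :
    P.len * tileAvg h P ^ 2 ≤ ∫ x in P.ival, h x ^ 2 := by
  set c := tileAvg h P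
  have hint : IntegrableOn h P.ival := hh.integrableOn P.volume_ival_ne_top
  have hint2 : IntegrableOn (fun x => h x ^ 2 - 2 * c * h x) P.ival :=
    (hh.sq.integrableOn P.volume_ival_ne_top).sub (hint.const_mul _)
  have hconst : IntegrableOn (fun _ => c ^ 2) P.ival := integrableOn_const P.volume_ival_ne_top
  have hexpand : ∫ x in P.ival, (h x - c) ^ 2 =
      (∫ x in P.ival, h x ^ 2) - 2 * c * (∫ x in P.ival, h x) + P.len * c ^ 2 := by
    have hpt : (fun x => (h x - c) ^ 2) = fun x => h x ^ 2 - 2 * c * h x + c ^ 2 := by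
      funext x; ring
    rw [hpt, integral_add hint2 hconst, integral_sub (hh.sq.integrableOn P.volume_ival_ne_top)
      (hint.const_mul _), integral_const_mul, setIntegral_const, smul_eq_mul, measureReal_def,
      P.volume_ival, ENNReal.toReal_ofReal P.len_pos.le]
  have : 0 ≤ ∫ x in P.ival, (h x - c) ^ 2 :=
    setIntegral_nonneg P.measurableSet_ival fun x _ => sq_nonneg _
  rw [hexpand, ← tileAvg_mul_len h P] at this
  nlinarith

lemma bellman_step {L a Sl Sr xl xr : ℝ} (hL : 0 < L) (ha : 0 ≤ a) (hSl : 0 ≤ Sl)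
    (hSr : 0 ≤ Sr) (hS : a + Sl + Sr ≤ L) :
    a * ((xl + xr) / 2) ^ 2 + 4 * L ^ 2 * ((xl + xr) / 2) ^ 2 / (L + (a + Sl + Sr)) ≤
      4 * (L / 2) ^ 2 * xl ^ 2 / (L / 2 + Sl) + 4 * (L / 2) ^ 2 * xr ^ 2 / (L / 2 + Sr) := by
  have hl : 0 < L / 2 + Sl := by linarith
  have hr : 0 < L / 2 + Sr := by linarith
  have titu : (xl + xr) ^ 2 / (L + Sl + Sr) ≤ xl ^ 2 / (L / 2 + Sl) + xr ^ 2 / (L / 2 + Sr) := by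
    rw [div_add_div _ _ hl.ne' hr.ne', div_le_div_iff₀ (by linarith) (by positivity)]
    nlinarith [sq_nonneg (xl * (L / 2 + Sr) - xr * (L / 2 + Sl))]
  have absorb : a / 4 + L ^ 2 / (L + (a + Sl + Sr)) ≤ L ^ 2 / (L + Sl + Sr) := by
    rw [div_add_div _ _ (by norm_num) (by linarith), div_le_div_iff₀ (by positivity) (by linarith)]
    have hprod : (L + (a + Sl + Sr)) * (L + Sl + Sr) ≤ 4 * L ^ 2 := by nlinarith
    nlinarith [mul_le_mul_of_nonneg_left hprod ha]
  calc a * ((xl + xr) / 2) ^ 2 + 4 * L ^ 2 * ((xl + xr) / 2) ^ 2 / (L + (a + Sl + Sr))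
      = (xl + xr) ^ 2 * (a / 4 + L ^ 2 / (L + (a + Sl + Sr))) := by ring
    _ ≤ (xl + xr) ^ 2 * (L ^ 2 / (L + Sl + Sr)) := mul_le_mul_of_nonneg_left absorb (sq_nonneg _)
    _ = L ^ 2 * ((xl + xr) ^ 2 / (L + Sl + Sr)) := by ring
    _ ≤ L ^ 2 * (xl ^ 2 / (L / 2 + Sl) + xr ^ 2 / (L / 2 + Sr)) := by gcongr
    _ = _ := by ring

section Carleson

variable {h : ℝ → ℝ} {a : Tile M → ℝ}

/-- Induction on scales: the second summand on the left absorbs `a_J` when passing from the two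
halves of `J` to `J` (`bellman_step`). -/
lemma sum_tilesUnder_mul_sq_tileAvg_add_le (hh : IsBddMeasurable h) (ha : ∀ P, 0 ≤ a P)
    (hcar : ∀ J : Tile M, ∑ P ∈ tilesUnder J, a P ≤ J.len) (J : Tile M) :
    ∑ P ∈ tilesUnder J, a P * tileAvg h P ^ 2 +
        4 * J.len ^ 2 * tileAvg h J ^ 2 / (J.len + ∑ P ∈ tilesUnder J, a P) ≤
      4 * ∫ x in J.ival, h x ^ 2 := by
  by_cases hJ : J.k = -(M : ℤ)
  · -- a tile of the finest scale: its halves contain no tiles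
    have hstep := bellman_step (xl := tileAvg h J) (xr := tileAvg h J) J.len_pos (ha J) le_rfl
      le_rfl (by simpa [tilesUnder_of_k_eq hJ] using hcar J)
    have hhalf : 4 * (J.len / 2) ^ 2 * tileAvg h J ^ 2 / (J.len / 2) =
        2 * (J.len * tileAvg h J ^ 2) := by
      field_simp [J.len_pos.ne']
      ring
    simp only [add_zero, add_self_div_two, hhalf] at hstep
    simp only [tilesUnder_of_k_eq hJ, Finset.sum_singleton]
    linarith [len_mul_sq_tileAvg_le hh J]
  have hk : -(M : ℤ) < J.k := J.hk_lb.lt_of_ne' hJ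
  have ihL := sum_tilesUnder_mul_sq_tileAvg_add_le hh ha hcar (J.childL hk)
  have ihR := sum_tilesUnder_mul_sq_tileAvg_add_le hh ha hcar (J.childR hk)
  rw [J.len_childL hk] at ihL
  rw [J.len_childR hk] at ihR
  have hS := hcar J
  rw [sum_tilesUnder_eq_add hk] at hS ⊢
  have hstep := bellman_step (xl := tileAvg h (J.childL hk)) (xr := tileAvg h (J.childR hk))
    J.len_pos (ha J) (Finset.sum_nonneg fun P _ => ha P) (Finset.sum_nonneg fun P _ => ha P) hS
  rw [sum_tilesUnder_eq_add hk,
    setIntegral_ival_eq_add (hh.sq.integrableOn J.volume_ival_ne_top) hk,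
    tileAvg_eq_add (hh.integrableOn J.volume_ival_ne_top) hk]
  linarith
termination_by (J.k + M).toNat
decreasing_by all_goals (simp only [Tile.k_childL, Tile.k_childR]; omega)

theorem sum_mul_sq_tileAvg_le (hh : IsBddMeasurable h) (ha : ∀ P, 0 ≤ a P) {C : ℝ} (hC : 0 ≤ C)
    (hcar : ∀ J : Tile M, ∑ P ∈ tilesUnder J, a P ≤ C * J.len) :
    ∑ P, a P * tileAvg h P ^ 2 ≤ 4 * C * ∫ x in Ico 0 (2 ^ (M : ℤ)), h x ^ 2 := by
  rcases hC.eq_or_lt with rfl | hC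
  · have ha0 (P : Tile M) : a P = 0 := by
      refine le_antisymm ?_ (ha P)
      simpa using (Finset.single_le_sum (fun Q _ => ha Q) (mem_tilesUnder.2 P.le_refl)).trans
        (hcar P)
    simp [ha0]
  have hbellman := sum_tilesUnder_mul_sq_tileAvg_add_le hh (a := fun P => a P / C)
    (fun P => div_nonneg (ha P) hC.le)
    (fun J => by rw [← Finset.sum_div, div_le_iff₀' hC]; exact hcar J) (topTile M)
  rw [tilesUnder_topTile, ival_topTile] at hbellman
  have hrest : 0 ≤ 4 * (topTile M).len ^ 2 * tileAvg h (topTile M) ^ 2 /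
      ((topTile M).len + ∑ P, a P / C) :=
    div_nonneg (by positivity) (add_nonneg (topTile M).len_pos.le
      (Finset.sum_nonneg fun P _ => div_nonneg (ha P) hC.le))
  have hdiv : ∑ P, a P / C * tileAvg h P ^ 2 = (∑ P, a P * tileAvg h P ^ 2) / C := by
    rw [Finset.sum_div]
    exact Finset.sum_congr rfl fun P _ => div_mul_eq_mul_div _ _ _
  rw [hdiv] at hbellman
  rw [_root_.mul_comm 4 C, _root_.mul_assoc, ← div_le_iff₀' hC]
  linarith

end Carleson

/-! ### BMO and the paraproducts -/

instance : Finite (Tree M) :=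
  Finite.of_injective (fun T : Tree M => (T.tiles, T.top)) fun T T' h => by
    cases T; cases T'; simp_all

lemma bddAbove_sizes (a : Tile M → ℝ) (PP : Set (Tile M)) : BddAbove
    (insert 0 {s : ℝ | ∃ T : Tree M, T.tiles ⊆ PP ∧ IsConvex T.tiles ∧ s = treeSize a T}) := by
  have hsub : {s : ℝ | ∃ T : Tree M, T.tiles ⊆ PP ∧ IsConvex T.tiles ∧ s = treeSize a T} ⊆
      range (treeSize a) := by
    rintro _ ⟨T, -, -, rfl⟩
    exact ⟨T, rfl⟩
  exact (((finite_range _).subset hsub).insert 0).bddAbove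

lemma maxSize_nonneg (a : Tile M → ℝ) (PP : Set (Tile M)) : 0 ≤ maxSize a PP :=
  le_csSup (bddAbove_sizes a PP) (mem_insert _ _)

lemma treeSize_le_maxSize (a : Tile M → ℝ) {T : Tree M} {PP : Set (Tile M)} (hT : T.tiles ⊆ PP)
    (hconv : IsConvex T.tiles) : treeSize a T ≤ maxSize a PP :=
  le_csSup (bddAbove_sizes a PP) (mem_insert_of_mem _ ⟨T, hT, hconv, rfl⟩)

def completeTree (J : Tile M) : Tree M := ⟨cTree J, J, J.le_refl, fun _ hP => hP⟩

lemma isConvex_cTree (J : Tile M) : IsConvex (cTree J) :=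
  fun _ _ _ hP₂ _ _ hP => hP.trans hP₂

lemma treeSize_completeTree (a : Tile M → ℝ) (J : Tile M) :
    treeSize a (completeTree J) = (∑ P ∈ tilesUnder J, a P) / J.len := by
  have : cTree J = ↑(tilesUnder J) := by ext P; simp [cTree]
  simp only [treeSize, completeTree, Tree.len, this, finsum_mem_coe_finset]

lemma sum_tilesUnder_sq_waveCoeff_le (g : ℝ → ℝ) (J : Tile M) :
    ∑ P ∈ tilesUnder J, waveCoeff g P ^ 2 ≤ bmoNorm M g ^ 2 * J.len := by
  rw [bmoNorm, Real.sq_sqrt (maxSize_nonneg _ _), ← div_le_iff₀ J.len_pos,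
    ← treeSize_completeTree]
  exact treeSize_le_maxSize _ (subset_univ _) (isConvex_cTree J)

lemma bmoNorm_nonneg (g : ℝ → ℝ) : 0 ≤ bmoNorm M g := Real.sqrt_nonneg _

lemma l2Norm_nonneg (f : ℝ → ℝ) : 0 ≤ l2Norm f := Real.sqrt_nonneg _

theorem sqrt_sum_sq_waveCoeff_mul_tileAvg_le (g : ℝ → ℝ) {h : ℝ → ℝ} (hh : IsBddMeasurable h)
    (hsupp : Function.support h ⊆ Ico 0 (2 ^ (M : ℤ))) :
    √(∑ P : Tile M, (waveCoeff g P * tileAvg h P) ^ 2) ≤ 2 * bmoNorm M g * l2Norm h := by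
  have hemb := sum_mul_sq_tileAvg_le hh (fun P => sq_nonneg (waveCoeff g P))
    (sq_nonneg (bmoNorm M g)) (sum_tilesUnder_sq_waveCoeff_le g)
  rw [setIntegral_eq_integral_of_forall_compl_eq_zero fun x hx => by
    rw [Function.notMem_support.1 fun h' => hx (hsupp h'), sq, zero_mul]] at hemb
  rw [Real.sqrt_le_left (by positivity [bmoNorm_nonneg (M := M) g, l2Norm_nonneg h]), l2Norm,
    mul_pow, Real.sq_sqrt (integral_nonneg fun x => sq_nonneg (h x))]
  simp only [mul_pow]
  linarith

lemma supNorm_nonneg {g : ℝ → ℝ} (hg : BddAbove (range fun x => |g x|)) : 0 ≤ supNorm g :=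
  (abs_nonneg _).trans (le_ciSup hg 0)

lemma abs_tileAvg_le_supNorm {g : ℝ → ℝ} (hg : BddAbove (range fun x => |g x|)) (P : Tile M) :
    |tileAvg g P| ≤ supNorm g := by
  have hint : |∫ x in P.ival, g x| ≤ supNorm g * P.len := by
    simpa [supNorm, measureReal_def, P.volume_ival, P.len_pos.le] using
      norm_setIntegral_le_of_norm_le_const P.volume_ival_ne_top.lt_top fun x _ =>
        (Real.norm_eq_abs _).trans_le (le_ciSup hg x)
  rw [tileAvg, abs_div, abs_of_pos P.len_pos, div_le_iff₀ P.len_pos]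
  exact hint

lemma paraHL_eq_haarSeries (f g : ℝ → ℝ) :
    paraHL M f g = haarSeries fun P : Tile M => waveCoeff f P * tileAvg g P := by
  funext x
  simp only [paraHL, haarSeries, finsum_eq_sum_of_fintype]

lemma paraLH_eq_haarSeries (f g : ℝ → ℝ) :
    paraLH M f g = haarSeries fun P : Tile M => tileAvg f P * waveCoeff g P := by
  funext x
  simp only [paraLH, haarSeries, finsum_eq_sum_of_fintype]

theorem l2Norm_paraHL_le {f g : ℝ → ℝ} (hf : IsBddMeasurable f)
    (hf2 : Integrable fun x => f x ^ 2) (hg : BddAbove (range fun x => |g x|)) :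
    l2Norm (paraHL M f g) ≤ l2Norm f * supNorm g := by
  rw [paraHL_eq_haarSeries, l2Norm_haarSeries,
    Real.sqrt_le_left (mul_nonneg (l2Norm_nonneg f) (supNorm_nonneg hg)), mul_pow, l2Norm,
    Real.sq_sqrt (integral_nonneg fun x => sq_nonneg (f x))]
  calc ∑ P : Tile M, (waveCoeff f P * tileAvg g P) ^ 2
      ≤ ∑ P : Tile M, waveCoeff f P ^ 2 * supNorm g ^ 2 := by
        gcongr with P
        rw [mul_pow]
        exact mul_le_mul_of_nonneg_left (sq_le_sq.2 ((abs_tileAvg_le_supNorm hg P).trans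
          (le_abs_self _))) (sq_nonneg _)
    _ ≤ (∫ x, f x ^ 2) * supNorm g ^ 2 := by
        rw [← Finset.sum_mul]
        gcongr
        exact sum_sq_waveCoeff_le hf hf2

theorem l2Norm_paraLH_le {f : ℝ → ℝ} (g : ℝ → ℝ) (hf : IsBddMeasurable f)
    (hsupp : Function.support f ⊆ Ico 0 (2 ^ (M : ℤ))) :
    l2Norm (paraLH M f g) ≤ 2 * l2Norm f * bmoNorm M g := by
  rw [paraLH_eq_haarSeries, l2Norm_haarSeries]
  simp_rw [_root_.mul_comm (tileAvg f _)]
  linarith [sqrt_sum_sq_waveCoeff_mul_tileAvg_le g hf hsupp]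

lemma paraHH_eq (f g : ℝ → ℝ) : paraHH M f g =
    fun x => ∑ P : Tile M, waveCoeff f P * waveCoeff g P / P.len * P.ival.indicator 1 x := by
  funext x
  simp only [paraHH, finsum_eq_sum_of_fintype, mul_div_right_comm]

lemma isBddMeasurable_paraHH (f g : ℝ → ℝ) : IsBddMeasurable (paraHH M f g) :=
  paraHH_eq (M := M) f g ▸ IsBddMeasurable.finsetSum _ fun P _ =>
    (IsBddMeasurable.indicator_one P.measurableSet_ival).const_mul _

lemma support_paraHH_subset (f g : ℝ → ℝ) :
    Function.support (paraHH M f g) ⊆ Ico 0 (2 ^ (M : ℤ)) := by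
  refine Function.support_subset_iff'.2 fun x hx => ?_
  rw [paraHH_eq]
  exact Finset.sum_eq_zero fun P _ => by
    rw [indicator_of_notMem fun h => hx (P.ival_subset_base h), mul_zero]

lemma integral_sq_paraHH (f g : ℝ → ℝ) :
    ∫ x, paraHH M f g x ^ 2 =
      ∑ P : Tile M, waveCoeff f P * (waveCoeff g P * tileAvg (paraHH M f g) P) := by
  have hpt (x : ℝ) : paraHH M f g x ^ 2 = ∑ P : Tile M,
      waveCoeff f P * waveCoeff g P / P.len * P.ival.indicator (paraHH M f g) x := by
    rw [sq]
    nth_rewrite 1 [paraHH_eq]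
    rw [Finset.sum_mul]
    refine Finset.sum_congr rfl fun P _ => ?_
    by_cases hx : x ∈ P.ival <;> simp [hx]
  simp_rw [hpt]
  rw [integral_finsetSum _ fun P _ => ((integrable_indicator_iff P.measurableSet_ival).2
    ((isBddMeasurable_paraHH f g).integrableOn P.volume_ival_ne_top)).const_mul _]
  refine Finset.sum_congr rfl fun P _ => ?_
  rw [integral_const_mul, integral_indicator P.measurableSet_ival, ← tileAvg_mul_len]
  field_simp [P.len_pos.ne']

theorem l2Norm_paraHH_le {f : ℝ → ℝ} (g : ℝ → ℝ) (hf : IsBddMeasurable f)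
    (hf2 : Integrable fun x => f x ^ 2) :
    l2Norm (paraHH M f g) ≤ 2 * l2Norm f * bmoNorm M g := by
  set F := paraHH M f g
  have hF : l2Norm F ^ 2 ≤ 2 * l2Norm f * bmoNorm M g * l2Norm F :=
    calc l2Norm F ^ 2 = ∑ P : Tile M, waveCoeff f P * (waveCoeff g P * tileAvg F P) := by
          rw [l2Norm, Real.sq_sqrt (integral_nonneg fun x => sq_nonneg (F x)), integral_sq_paraHH]
      _ ≤ √(∑ P : Tile M, waveCoeff f P ^ 2) *
            √(∑ P : Tile M, (waveCoeff g P * tileAvg F P) ^ 2) :=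
          Real.sum_mul_le_sqrt_mul_sqrt _ _ _
      _ ≤ l2Norm f * (2 * bmoNorm M g * l2Norm F) :=
          mul_le_mul (Real.sqrt_le_sqrt (sum_sq_waveCoeff_le hf hf2))
            (sqrt_sum_sq_waveCoeff_mul_tileAvg_le g (isBddMeasurable_paraHH f g)
              (support_paraHH_subset f g)) (Real.sqrt_nonneg _) (l2Norm_nonneg f)
      _ = 2 * l2Norm f * bmoNorm M g * l2Norm F := by ring
  rcases (l2Norm_nonneg F).eq_or_lt with h0 | hpos
  · rw [← h0]; positivity [l2Norm_nonneg f, bmoNorm_nonneg (M := M) g]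
  · exact le_of_mul_le_mul_right (by rwa [sq] at hF) hpos

/-- Corollary 6.2: `L² × BMO → L²` paraproduct estimates. -/
theorem statement11 :
    ∃ C : ℝ, 0 < C ∧
      ∀ (M : ℕ) (f g : ℝ → ℝ), IsTestFun M f → IsTestFun M g →
        l2Norm (paraHL M f g) ≤ C * l2Norm f * supNorm g ∧
        l2Norm (paraHH M f g) ≤ C * l2Norm f * bmoNorm M g ∧
        l2Norm (paraLH M f g) ≤ C * l2Norm f * bmoNorm M g := by
  refine ⟨2, two_pos, fun M f g hf hg => ⟨?_, l2Norm_paraHH_le g hf.isBddMeasurable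
    hf.integrable_sq, l2Norm_paraLH_le g hf.isBddMeasurable hf.support_subset⟩⟩
  calc l2Norm (paraHL M f g) ≤ l2Norm f * supNorm g :=
        l2Norm_paraHL_le hf.isBddMeasurable hf.integrable_sq hg.bddAbove_abs
    _ ≤ 2 * l2Norm f * supNorm g := by
        rw [_root_.mul_assoc]
        exact le_mul_of_one_le_left (mul_nonneg (l2Norm_nonneg f)
          (supNorm_nonneg hg.bddAbove_abs)) one_le_two

end Dyadic
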